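/- Consider the dynamic program M defined over buyers i = n,...,1 and grid values a ∈ A = {0, 1/c, 2/c, ..., n}, by M(n,a) = max over (ξ_n, p_n) with w_{n,ξ_n,p_n} ≥ a of z_n(ξ_n,p_n)·p_n, and M(i,a) = max over (ξ_i, p_i, a' ∈ A) with w_{i,ξ_i,p_i} + a' ≥ a of z_i(ξ_i,p_i)·p_i + (1 − z_i(ξ_i,p_i))·M(i+1, a'), where z_i(ξ_i,p_i) ∈ [0,1]. Then for every i and every real a ∈ [0, n], M(i, a − (n−i)/c) ≥ max_{(ξ,p) ∈ S(i,a)} Rev_{≥i}(p, ξ), where S(i,a) = {(ξ,p) : ∑_{j ≥ i} w_{j,ξ_j,p_j} ≥ a} and Rev_{≥i}(p,ξ) = z_i p_i + (1 − z_i)·Rev_{≥i+1}(p,ξ) with Rev_{≥n+1} = 0 (assuming the grid argument a − (n−i)/c is rounded down to the nearest grid point ≥ a − (n−i+1)/c). -/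
import Mathlib


open Finset

/-- The dynamic-programming table of the MAX-LINREV algorithm: `DP w z pr A m i a`
is `M(i, a)` computed over the `m` buyers `i, i+1, ..., i+m−1`, where for the last
buyer `M = max_{(ξ,p): w ≥ a} z·pr(p)` and otherwise
`M(i,a) = max_{(ξ_i,p_i,a'∈A): w_{i,ξ_i,p_i}+a' ≥ a} [z·pr(p_i) + (1−z)·M(i+1,a')]`
(the maximum over an empty feasible set being 0). -/
noncomputable def DP {X P : Type} [Fintype X] [Fintype P]
    (w z : ℕ → X → P → ℝ) (pr : P → ℝ) (A : Finset ℝ) : ℕ → ℕ → ℝ → ℝ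
  | 0, _, _ => 0
  | 1, i, a =>
      (Finset.univ.filter (fun xp : X × P => a ≤ w i xp.1 xp.2)).fold max 0
        (fun xp => z i xp.1 xp.2 * pr xp.2)
  | (m + 2), i, a =>
      ((((Finset.univ : Finset (X × P)) ×ˢ A)).filter
          (fun yy : (X × P) × ℝ => a ≤ w i yy.1.1 yy.1.2 + yy.2)).fold max 0
        (fun yy => z i yy.1.1 yy.1.2 * pr yy.1.2 +
          (1 - z i yy.1.1 yy.1.2) * DP w z pr A (m + 1) (i + 1) yy.2)

/-- `Rev_{≥i}(p, ξ)` over the `m` buyers `i, ..., i+m−1`: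
`Rev_{≥i} = z_i·pr(p_i) + (1 − z_i)·Rev_{≥i+1}`, with `Rev = 0` after the last buyer. -/
def RevGe {X P : Type} (z : ℕ → X → P → ℝ) (pr : P → ℝ)
    (ξ : ℕ → X) (p : ℕ → P) : ℕ → ℕ → ℝ
  | 0, _ => 0
  | m + 1, i =>
      z i (ξ i) (p i) * pr (p i) + (1 - z i (ξ i) (p i)) * RevGe z pr ξ p m (i + 1)

/-- For every buyer i and every a ∈ [0, n], the DP table dominates the
constrained optimum: M(i, a') ≥ max_{(ξ,p) ∈ S(i,a)} Rev_{≥i}(p, ξ) for any grid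
point a' ∈ A with a' ≤ a − (n−1−i)/c (rounding the shifted value down to the grid). -/
theorem dp_dominates_constrained_revenue (n c : ℕ) (hn : 1 ≤ n) (hc : 0 < c)
    (X P : Type) [Fintype X] [Fintype P]
    (w z : ℕ → X → P → ℝ) (pr : P → ℝ)
    (hw : ∀ i x p, w i x p ∈ Set.Icc (0 : ℝ) 1)
    (hz : ∀ i x p, z i x p ∈ Set.Icc (0 : ℝ) 1)
    (hpr : ∀ p, pr p ∈ Set.Icc (0 : ℝ) 1)
    (A : Finset ℝ) (hA : A = (Finset.range (n * c + 1)).image (fun j : ℕ => (j : ℝ) / c)) :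
    ∀ i < n, ∀ a : ℝ, a ∈ Set.Icc (0 : ℝ) n →
      ∀ a' ∈ A, a' ≤ a - ((n - 1 - i : ℕ) : ℝ) / c →
        ∀ (ξ : ℕ → X) (p : ℕ → P),
          a ≤ ∑ j ∈ Finset.Ico i n, w j (ξ j) (p j) →
          DP w z pr A (n - i) i a' ≥ RevGe z pr ξ p (n - i) i := by

  intro i hi a _ha a' ha'A ha'le ξ p hsum
  have hcR : (0:ℝ) < (c:ℝ) := by exact_mod_cast hc
  -- key lemma
  have key : ∀ m : ℕ, ∀ i : ℕ, 1 ≤ m → i + m ≤ n → ∀ b ∈ A,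
      b ≤ max 0 (∑ j ∈ Finset.Ico i (i + m), w j (ξ j) (p j) - ((m - 1 : ℕ) : ℝ) / c) →
      DP w z pr A m i b ≥ RevGe z pr ξ p m i := by
    intro m
    induction m using Nat.strong_induction_on with
    | _ m IH =>
      match m with
      | 0 => intro i h1; exact absurd h1 (by omega)
      | 1 =>
        intro i _ _ b hbA hble
        have hsum1 : ∑ j ∈ Finset.Ico i (i + 1), w j (ξ j) (p j) = w i (ξ i) (p i) := by
          simp
        have hble' : b ≤ w i (ξ i) (p i) := by
          have h := hble
          rw [hsum1] at h
          have h0 : ((1 - 1 : ℕ) : ℝ) / c = 0 := by norm_num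
          rw [h0, sub_zero, max_eq_right (hw i (ξ i) (p i)).1] at h
          exact h
        have hmem : (ξ i, p i) ∈ (Finset.univ.filter
            (fun xp : X × P => b ≤ w i xp.1 xp.2)) := by
          simp [hble']
        have : z i (ξ i) (p i) * pr (p i) ≤
            (Finset.univ.filter (fun xp : X × P => b ≤ w i xp.1 xp.2)).fold max 0
              (fun xp => z i xp.1 xp.2 * pr xp.2) :=
          (Finset.le_fold_max _).mpr (Or.inr ⟨(ξ i, p i), hmem, le_rfl⟩)
        simpa [DP, RevGe] using this
      | (m + 2) =>
        intro i _ hin b hbA hble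
        set S' : ℝ := ∑ j ∈ Finset.Ico (i + 1) (i + 1 + (m + 1)), w j (ξ j) (p j) with hS'
        have hsplit : ∑ j ∈ Finset.Ico i (i + (m + 2)), w j (ξ j) (p j)
            = w i (ξ i) (p i) + S' := by
          rw [hS', show i + (m + 2) = i + 1 + (m + 1) by omega,
            Finset.sum_eq_sum_Ico_succ_bot (by omega)]
        set T : ℝ := max 0 (S' - (m : ℝ) / c) with hT
        have hT0 : (0:ℝ) ≤ T := le_max_left _ _
        have hS'le : S' ≤ (m + 1 : ℝ) := by
          calc S' ≤ (Finset.Ico (i + 1) (i + 1 + (m + 1))).card • (1:ℝ) :=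
                Finset.sum_le_card_nsmul _ _ 1 (fun j _ => (hw j (ξ j) (p j)).2)
            _ = (m + 1 : ℝ) := by
                rw [Nat.card_Ico, nsmul_eq_mul, mul_one]
                have : i + 1 + (m + 1) - (i + 1) = m + 1 := by omega
                rw [this]
                push_cast
                ring
        have hTn : T ≤ (n : ℝ) := by
          apply max_le
          · exact_mod_cast Nat.zero_le n
          · have h1 : (m + 1 : ℝ) ≤ (n : ℝ) := by exact_mod_cast (by omega : m + 1 ≤ n)
            have h2 : (0:ℝ) ≤ (m : ℝ) / c := by positivity
            linarith
        set k : ℕ := ⌊(c : ℝ) * T⌋₊ with hk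
        set b' : ℝ := (k : ℝ) / c with hb'
        have hkle : (k : ℝ) ≤ (c : ℝ) * T := Nat.floor_le (by positivity)
        have hb'T : b' ≤ T := by
          rw [hb', div_le_iff₀ hcR]
          linarith [hkle]
        have hb'0 : (0:ℝ) ≤ b' := by positivity
        have hb'low : T - 1 / c ≤ b' := by
          have h2 : (c : ℝ) * T - 1 < (k : ℝ) := by
            rw [hk]; exact Nat.sub_one_lt_floor _
          rw [hb', le_div_iff₀ hcR, sub_mul, div_mul_cancel₀ _ (ne_of_gt hcR)]
          linarith
        have hb'A : b' ∈ A := by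
          rw [hA]
          refine Finset.mem_image.mpr ⟨k, Finset.mem_range.mpr ?_, rfl⟩
          have h2 : (k : ℝ) ≤ ((n * c : ℕ) : ℝ) := by
            push_cast
            nlinarith [hkle, hTn, hcR]
          have : k ≤ n * c := by exact_mod_cast h2
          omega
        -- feasibility of ((ξ i, p i), b')
        have hfeas : b ≤ w i (ξ i) (p i) + b' := by
          refine hble.trans (max_le ?_ ?_)
          · have := (hw i (ξ i) (p i)).1
            linarith
          · rw [hsplit]
            have hcast : ((m + 2 - 1 : ℕ) : ℝ) = (m : ℝ) + 1 := by push_cast; ring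
            rw [hcast]
            have h1 : S' - (m : ℝ) / c ≤ T := le_max_right _ _
            have h2 : ((m : ℝ) + 1) / c = (m : ℝ) / c + 1 / c := by ring
            linarith [hb'low]
        have hmem : ((ξ i, p i), b') ∈ ((((Finset.univ : Finset (X × P)) ×ˢ A)).filter
            (fun yy : (X × P) × ℝ => b ≤ w i yy.1.1 yy.1.2 + yy.2)) := by
          simp [Finset.mem_product, hb'A, hfeas]
        have hfold : z i (ξ i) (p i) * pr (p i) +
            (1 - z i (ξ i) (p i)) * DP w z pr A (m + 1) (i + 1) b' ≤
            ((((Finset.univ : Finset (X × P)) ×ˢ A)).filter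
              (fun yy : (X × P) × ℝ => b ≤ w i yy.1.1 yy.1.2 + yy.2)).fold max 0
              (fun yy => z i yy.1.1 yy.1.2 * pr yy.1.2 +
                (1 - z i yy.1.1 yy.1.2) * DP w z pr A (m + 1) (i + 1) yy.2) :=
          (Finset.le_fold_max _).mpr (Or.inr ⟨((ξ i, p i), b'), hmem, le_rfl⟩)
        have hIH : DP w z pr A (m + 1) (i + 1) b' ≥ RevGe z pr ξ p (m + 1) (i + 1) := by
          apply IH (m + 1) (by omega) (i + 1) (by omega) (by omega) b' hb'A
          have hcast : ((m + 1 - 1 : ℕ) : ℝ) = (m : ℝ) := by push_cast; ring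
          rw [hcast]
          exact hb'T.trans (le_of_eq rfl)
        have hz1 : (0:ℝ) ≤ 1 - z i (ξ i) (p i) := by linarith [(hz i (ξ i) (p i)).2]
        have : RevGe z pr ξ p (m + 2) i ≤ z i (ξ i) (p i) * pr (p i) +
            (1 - z i (ξ i) (p i)) * DP w z pr A (m + 1) (i + 1) b' := by
          show z i (ξ i) (p i) * pr (p i) + (1 - z i (ξ i) (p i)) *
              RevGe z pr ξ p (m + 1) (i + 1) ≤ _
          have := mul_le_mul_of_nonneg_left hIH hz1
          linarith
        calc RevGe z pr ξ p (m + 2) i ≤ _ := this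
          _ ≤ _ := hfold
  -- apply the key lemma
  have h1 : i + (n - i) = n := by omega
  apply key (n - i) i (by omega) (by omega) a' ha'A
  rw [h1]
  have hcast : ((n - i - 1 : ℕ) : ℝ) = ((n - 1 - i : ℕ) : ℝ) := by
    congr 1
    omega
  rw [hcast]
  refine le_max_of_le_right ?_
  linarith [ha'le, hsum]
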